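/- Let G be a simple graph, let φ be a new vertex added to G with neighbor set κ ⊆ V(G), forming graph G'. Then every maximal clique of G' that contains φ is of the form (W ∩ κ) ∪ {φ} for some maximal clique W of G (with the convention that if no maximal clique of G intersects κ, the new maximal clique is {φ}). -/

import Mathlib

/-- The graph `G` extended by a new vertex `none` adjacent exactly to `κ`. -/
def extendGraph {V : Type*} (G : SimpleGraph V) (κ : Set V) : SimpleGraph (Option V) where
  Adj x y :=
    match x, y with
    | some a, some b => G.Adj a b
    | none, some a => a ∈ κ
    | some a, none => a ∈ κ
    | none, none => False
  symm := by
    constructor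
    intro x y h
    cases x <;> cases y <;> simp_all <;> exact h.symm
  loopless := by
    constructor
    intro x
    cases x <;> simp

def IsMaxClique {V : Type*} (G : SimpleGraph V) (s : Set V) : Prop :=
  G.IsClique s ∧ ∀ t : Set V, G.IsClique t → s ⊆ t → s = t

/-!
The part of a maximal clique `C ∋ φ` of `G'` inside `G` is a clique `S ⊆ κ`. By Zorn, `S` lies in
a maximal clique `W` of `G`, so `C ⊆ (W ∩ κ) ∪ {φ}`; the latter is a clique of `G'`, hence equal
to `C` by maximality.
-/

section

variable {V : Type*} (G : SimpleGraph V) (κ : Set V)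

theorem exists_isMaxClique_superset {S : Set V} (hS : G.IsClique S) :
    ∃ W, IsMaxClique G W ∧ S ⊆ W := by
  obtain ⟨W, hSW, hW⟩ := zorn_subset_nonempty {t | G.IsClique t}
    (fun c hc hchain _ =>
      ⟨⋃₀ c, (G.isClique_sUnion hchain.directedOn).2 hc, fun _ => Set.subset_sUnion_of_mem⟩) S hS
  exact ⟨W, ⟨hW.prop, fun t ht hWt => hWt.antisymm (hW.2 ht hWt)⟩, hSW⟩

theorem isClique_extendGraph_preimage_some {C : Set (Option V)}
    (hC : (extendGraph G κ).IsClique C) : G.IsClique (some ⁻¹' C) :=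
  fun _ ha _ hb hab => hC ha hb (Option.some_injective _ |>.ne hab)

theorem preimage_some_subset_of_none_mem {C : Set (Option V)}
    (hC : (extendGraph G κ).IsClique C) (hφ : none ∈ C) : some ⁻¹' C ⊆ κ :=
  fun _ ha => hC hφ ha (Option.some_ne_none _).symm

theorem isClique_extendGraph_image_inter_union {W : Set V} (hW : G.IsClique W) :
    (extendGraph G κ).IsClique (some '' (W ∩ κ) ∪ {none}) := by
  rintro (_ | a) hx (_ | b) hy hxy <;> simp only [Set.mem_union, Set.mem_image,
    Set.mem_singleton_iff, Option.some_inj, reduceCtorEq, exists_eq_right, or_false] at hx hy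
  · exact absurd rfl hxy
  · exact hy.2
  · exact hx.2
  · exact hW hx.1 hy.1 (by simpa using hxy)

end

theorem stmt_4_general {V : Type*} (G : SimpleGraph V) (κ : Set V)
    (C : Set (Option V)) (hC : IsMaxClique (extendGraph G κ) C) (hφ : none ∈ C) :
    (∃ W : Set V, IsMaxClique G W ∧ C = (some '' (W ∩ κ)) ∪ {none}) ∨
      ((∀ W : Set V, IsMaxClique G W → W ∩ κ = ∅) ∧ C = {(none : Option V)}) := by
  obtain ⟨hCclique, hCmax⟩ := hC
  obtain ⟨W, hW, hSW⟩ :=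
    exists_isMaxClique_superset G (isClique_extendGraph_preimage_some G κ hCclique)
  have hSκ := preimage_some_subset_of_none_mem G κ hCclique hφ
  refine .inl ⟨W, hW, hCmax _ (isClique_extendGraph_image_inter_union G κ hW.1) ?_⟩
  rintro (_ | a) ha
  · exact .inr rfl
  · exact .inl ⟨a, ⟨hSW ha, hSκ ha⟩, rfl⟩

/-- Every maximal clique of the extended graph containing the new vertex has the
form `(W ∩ κ) ∪ {φ}` for some maximal clique `W` of `G`; if no maximal clique of
`G` meets `κ`, the new maximal clique is `{φ}`. -/
theorem stmt_4 {V : Type*} [Fintype V] (G : SimpleGraph V) (κ : Set V)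
    (C : Set (Option V)) (hC : IsMaxClique (extendGraph G κ) C) (hφ : none ∈ C) :
    (∃ W : Set V, IsMaxClique G W ∧ C = (some '' (W ∩ κ)) ∪ {none}) ∨
      ((∀ W : Set V, IsMaxClique G W → W ∩ κ = ∅) ∧ C = {(none : Option V)}) :=
  stmt_4_general G κ C hC hφ
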